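/- Slicing inequality: Let X, Y be finite probability spaces and U a finite probability space such that there are reductions from spaces X̂ → X, X̂ → U and Ŷ → Y, Ŷ → U (a 'two-tents' configuration X ← X̂ → U ← Ŷ → Y). Then k(X,Y) ≤ ∫_U k(X|u, Y|u) dp_U(u) + 2·Ent(U), where X|u and Y|u are the conditioned spaces. -/

import Mathlib

open scoped Classical BigOperators
open Finset

noncomputable section

/-- A probability distribution on a finite set. -/
def IsDist {S : Type*} [Fintype S] (p : S → ℝ) : Prop :=
  (∀ x, 0 ≤ p x) ∧ ∑ x, p x = 1

/-- Shannon entropy (natural logarithm). -/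
def ent {S : Type*} [Fintype S] (p : S → ℝ) : ℝ :=
  -∑ x, p x * Real.log (p x)

/-- Relative entropy (Kullback–Leibler divergence). -/
def KL {S : Type*} [Fintype S] (p q : S → ℝ) : ℝ :=
  ∑ x, p x * Real.log (p x / q x)

/-- The n-fold product (Bernoulli) distribution. -/
def powDist {S : Type*} [Fintype S] (p : S → ℝ) (n : ℕ) : (Fin n → S) → ℝ :=
  fun f => ∏ i, p (f i)

/-- Tensor product of two distributions. -/
def prodDist {S T : Type*} [Fintype S] [Fintype T] (p : S → ℝ) (q : T → ℝ) :
    S × T → ℝ :=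
  fun z => p z.1 * q z.2

/-- Empirical distribution of a sequence. -/
def emp {S : Type*} [Fintype S] {n : ℕ} (f : Fin n → S) : S → ℝ :=
  fun a => ((univ.filter (fun i => f i = a)).card : ℝ) / n

/-- A coupling (joint distribution with given marginals). -/
def IsCoupling {S T : Type*} [Fintype S] [Fintype T]
    (w : S × T → ℝ) (p : S → ℝ) (q : T → ℝ) : Prop :=
  IsDist w ∧ (∀ x, ∑ y, w (x, y) = p x) ∧ (∀ y, ∑ x, w (x, y) = q y)

/-- The intrinsic Kolmogorov–Sinai distance. -/
def kdist {S T : Type*} [Fintype S] [Fintype T] (p : S → ℝ) (q : T → ℝ) : ℝ :=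
  sInf {d : ℝ | ∃ w : S × T → ℝ, IsCoupling w p q ∧ d = 2 * ent w - ent p - ent q}

end


/-! Glue couplings of the conditional spaces `X|r`, `Y|r`, each within `ε` of optimal, into
the mixture `w = ∑ r, u r • W r`, a coupling of `p` and `q`. Forgetting `r` can only lower
entropy, so `ent w ≤ ent u + ∑ r, u r * ent (W r)`, while concavity of entropy gives
`∑ r, u r * ent (X|r) ≤ ent p` and likewise for `q`. Hence the cost of `w` is at most the
average conditional cost plus `2 * ent u`. -/

open Real

section Entropy

variable {S T R : Type*} [Fintype S] [Fintype T] [Fintype R]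

lemma ent_eq_sum_negMulLog (p : S → ℝ) : ent p = ∑ x, negMulLog (p x) := by
  simp only [ent, negMulLog, neg_mul, sum_neg_distrib]

lemma negMulLog_sum_le {ι : Type*} (s : Finset ι) {a : ι → ℝ} (ha : ∀ i ∈ s, 0 ≤ a i) :
    negMulLog (∑ i ∈ s, a i) ≤ ∑ i ∈ s, negMulLog (a i) := by
  rw [negMulLog, neg_mul, ← mul_neg, sum_mul]
  refine sum_le_sum fun i hi => ?_
  rcases (ha i hi).eq_or_lt with h | h
  · simp [← h]
  · rw [negMulLog, neg_mul, ← mul_neg]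
    have := log_le_log h (single_le_sum ha hi)
    gcongr

lemma ent_fst_marginal_le {w : S × T → ℝ} (hw : ∀ z, 0 ≤ w z) :
    ent (fun x => ∑ y, w (x, y)) ≤ ent w := by
  simp only [ent_eq_sum_negMulLog, Fintype.sum_prod_type]
  exact sum_le_sum fun x _ => negMulLog_sum_le _ fun y _ => hw (x, y)

lemma ent_snd_marginal_le {w : S × T → ℝ} (hw : ∀ z, 0 ≤ w z) :
    ent (fun y => ∑ x, w (x, y)) ≤ ent w := by
  have hswap : ent (fun z : T × S => w z.swap) = ent w :=
    congrArg Neg.neg (Fintype.sum_equiv (Equiv.prodComm T S) _ _ fun _ => rfl)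
  exact hswap ▸ ent_fst_marginal_le fun z => hw z.swap

lemma ent_mul_cond (u : R → ℝ) (v : R → S → ℝ) (hv : ∀ r, u r ≠ 0 → ∑ x, v r x = 1) :
    ent (fun xr : S × R => u xr.2 * v xr.2 xr.1) = ent u + ∑ r, u r * ent (v r) := by
  simp only [ent_eq_sum_negMulLog, Fintype.sum_prod_type_right, negMulLog_mul, sum_add_distrib,
    ← sum_mul, ← mul_sum]
  congr 1
  refine sum_congr rfl fun r _ => ?_
  by_cases hr : u r = 0
  · simp [hr]
  · rw [hv r hr, one_mul]

lemma sum_mul_ent_le_ent_sum {u : R → ℝ} (hu : IsDist u) {v : R → S → ℝ}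
    (hv : ∀ r x, 0 ≤ v r x) :
    ∑ r, u r * ent (v r) ≤ ent (fun x => ∑ r, u r * v r x) := by
  simp only [ent_eq_sum_negMulLog, mul_sum]
  rw [sum_comm]
  refine sum_le_sum fun x _ => ?_
  simpa only [smul_eq_mul] using
    concaveOn_negMulLog.le_map_sum (fun r _ => hu.1 r) hu.2 (fun r _ => Set.mem_Ici.2 (hv r x))

end Entropy

section Weighted

variable {R : Type*} [Fintype R] {u : R → ℝ}

lemma sum_mul_le_sum_mul_of_pos (hu : ∀ r, 0 ≤ u r) {f g : R → ℝ}
    (h : ∀ r, 0 < u r → f r ≤ g r) : ∑ r, u r * f r ≤ ∑ r, u r * g r :=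
  sum_le_sum fun r _ => by
    rcases (hu r).eq_or_lt with hr | hr
    · simp [← hr]
    · exact mul_le_mul_of_nonneg_left (h r hr) hr.le

lemma sum_mul_congr_of_pos (hu : ∀ r, 0 ≤ u r) {f g : R → ℝ}
    (h : ∀ r, 0 < u r → f r = g r) : ∑ r, u r * f r = ∑ r, u r * g r :=
  (sum_mul_le_sum_mul_of_pos hu fun r hr => (h r hr).le).antisymm
    (sum_mul_le_sum_mul_of_pos hu fun r hr => (h r hr).ge)

end Weighted

namespace IsCoupling

variable {S T R : Type*} [Fintype S] [Fintype T] [Fintype R]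

lemma ent_sub_nonneg {w : S × T → ℝ} {p : S → ℝ} {q : T → ℝ} (hw : IsCoupling w p q) :
    0 ≤ 2 * ent w - ent p - ent q := by
  have hp : p = fun x => ∑ y, w (x, y) := funext fun x => (hw.2.1 x).symm
  have hq : q = fun y => ∑ x, w (x, y) := funext fun y => (hw.2.2 y).symm
  have := ent_fst_marginal_le hw.1.1
  have := ent_snd_marginal_le hw.1.1
  subst hp hq
  linarith

variable {w : S × R → ℝ} {p : S → ℝ} {u : R → ℝ}

lemma isDist_cond (hw : IsCoupling w p u) {r : R} (hr : 0 < u r) :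
    IsDist (fun x => w (x, r) / u r) :=
  ⟨fun x => div_nonneg (hw.1.1 _) hr.le, by rw [← sum_div, hw.2.2 r, div_self hr.ne']⟩

lemma mul_cond (hw : IsCoupling w p u) (x : S) (r : R) : u r * (w (x, r) / u r) = w (x, r) := by
  by_cases hr : u r = 0
  · have hsum : ∑ x, w (x, r) = 0 := hr ▸ hw.2.2 r
    rw [hr, zero_mul, (sum_eq_zero_iff_of_nonneg fun x _ => hw.1.1 (x, r)).1 hsum x (mem_univ x)]
  · exact mul_div_cancel₀ _ hr

lemma eq_sum_mul_cond (hw : IsCoupling w p u) : p = fun x => ∑ r, u r * (w (x, r) / u r) :=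
  funext fun x => by simp only [hw.mul_cond, hw.2.1]

end IsCoupling

section Kdist

variable {S T R : Type*} [Fintype S] [Fintype T] [Fintype R]

lemma isCoupling_prodDist {p : S → ℝ} {q : T → ℝ} (hp : IsDist p) (hq : IsDist q) :
    IsCoupling (prodDist p q) p q := by
  refine ⟨⟨fun z => mul_nonneg (hp.1 z.1) (hq.1 z.2), ?_⟩, fun x => ?_, fun y => ?_⟩
  · simp only [prodDist, Fintype.sum_prod_type, ← mul_sum, hq.2, mul_one, hp.2]
  · simp only [prodDist, ← mul_sum, hq.2, mul_one]
  · simp only [prodDist, ← sum_mul, hp.2, one_mul]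

lemma kdist_le_of_isCoupling {w : S × T → ℝ} {p : S → ℝ} {q : T → ℝ} (hw : IsCoupling w p q) :
    kdist p q ≤ 2 * ent w - ent p - ent q :=
  csInf_le ⟨0, by rintro _ ⟨w', hw', rfl⟩; exact hw'.ent_sub_nonneg⟩ ⟨w, hw, rfl⟩

lemma exists_isCoupling_lt_kdist_add {p : S → ℝ} {q : T → ℝ} (hp : IsDist p) (hq : IsDist q)
    {ε : ℝ} (hε : 0 < ε) :
    ∃ w, IsCoupling w p q ∧ 2 * ent w - ent p - ent q < kdist p q + ε := by
  have hne : {d | ∃ w : S × T → ℝ, IsCoupling w p q ∧ d = 2 * ent w - ent p - ent q}.Nonempty :=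
    ⟨_, prodDist p q, isCoupling_prodDist hp hq, rfl⟩
  obtain ⟨_, ⟨w, hw, rfl⟩, hlt⟩ := Real.lt_sInf_add_pos hne hε
  exact ⟨w, hw, hlt⟩

lemma isCoupling_mix {u : R → ℝ} (hu : IsDist u) {W : R → S × T → ℝ} {P : R → S → ℝ}
    {Q : R → T → ℝ} (hW : ∀ r, 0 < u r → IsCoupling (W r) (P r) (Q r)) :
    IsCoupling (fun z => ∑ r, u r * W r z) (fun x => ∑ r, u r * P r x)
      (fun y => ∑ r, u r * Q r y) := by
  refine ⟨⟨fun z => ?_, ?_⟩, fun x => ?_, fun y => ?_⟩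
  · simpa using sum_mul_le_sum_mul_of_pos hu.1 (f := 0) fun r hr => (hW r hr).1.1 z
  · rw [sum_comm]
    simp only [← mul_sum]
    rw [sum_mul_congr_of_pos hu.1 (g := 1) fun r hr => (hW r hr).1.2]
    simpa using hu.2
  · rw [sum_comm]
    simp only [← mul_sum]
    exact sum_mul_congr_of_pos hu.1 fun r hr => (hW r hr).2.1 x
  · rw [sum_comm]
    simp only [← mul_sum]
    exact sum_mul_congr_of_pos hu.1 fun r hr => (hW r hr).2.2 y

end Kdist

theorem kdist_mix_le {S T R : Type*} [Fintype S] [Fintype T] [Fintype R] {u : R → ℝ}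
    (hu : IsDist u) {P : R → S → ℝ} {Q : R → T → ℝ} {W : R → S × T → ℝ}
    (hP : ∀ r x, 0 ≤ P r x) (hQ : ∀ r y, 0 ≤ Q r y) (hW₀ : ∀ r z, 0 ≤ W r z)
    (hW : ∀ r, 0 < u r → IsCoupling (W r) (P r) (Q r)) :
    kdist (fun x => ∑ r, u r * P r x) (fun y => ∑ r, u r * Q r y) ≤
      ∑ r, u r * (2 * ent (W r) - ent (P r) - ent (Q r)) + 2 * ent u := by
  have hjoint : ent (fun z => ∑ r, u r * W r z) ≤ ent u + ∑ r, u r * ent (W r) := by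
    rw [← ent_mul_cond u W fun r hr => (hW r ((hu.1 r).lt_of_ne' hr)).1.2]
    exact ent_fst_marginal_le fun zr : (S × T) × R => mul_nonneg (hu.1 zr.2) (hW₀ zr.2 zr.1)
  have hconcP := sum_mul_ent_le_ent_sum hu hP
  have hconcQ := sum_mul_ent_le_ent_sum hu hQ
  have hsplit : ∑ r, u r * (2 * ent (W r) - ent (P r) - ent (Q r)) =
      2 * ∑ r, u r * ent (W r) - ∑ r, u r * ent (P r) - ∑ r, u r * ent (Q r) := by
    simp only [mul_sub, sum_sub_distrib, mul_left_comm _ (2 : ℝ), ← mul_sum]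
  have := kdist_le_of_isCoupling (isCoupling_mix hu hW)
  linarith

theorem stmt15_general {S T R : Type*} [Fintype S] [Fintype T] [Fintype R]
    (p : S → ℝ) (q : T → ℝ) (u : R → ℝ)
    (hu : IsDist u)
    (w₁ : S × R → ℝ) (w₂ : T × R → ℝ)
    (hw₁ : IsCoupling w₁ p u) (hw₂ : IsCoupling w₂ q u) :
    kdist p q ≤
      (∑ r : R, u r * kdist (fun x => w₁ (x, r) / u r) (fun y => w₂ (y, r) / u r))
        + 2 * ent u := by
  refine le_of_forall_pos_le_add fun ε hε => ?_
  have hnear : ∀ r, ∃ W : S × T → ℝ, (∀ z, 0 ≤ W z) ∧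
      (0 < u r → IsCoupling W (fun x => w₁ (x, r) / u r) (fun y => w₂ (y, r) / u r) ∧
        2 * ent W - ent (fun x => w₁ (x, r) / u r) - ent (fun y => w₂ (y, r) / u r) ≤
          kdist (fun x => w₁ (x, r) / u r) (fun y => w₂ (y, r) / u r) + ε) := by
    intro r
    by_cases hr : 0 < u r
    · obtain ⟨W, hW, hlt⟩ :=
        exists_isCoupling_lt_kdist_add (hw₁.isDist_cond hr) (hw₂.isDist_cond hr) hε
      exact ⟨W, hW.1.1, fun _ => ⟨hW, hlt.le⟩⟩
    · exact ⟨0, fun _ => le_rfl, fun h => absurd h hr⟩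
  choose W hW₀ hW using hnear
  have hmix := kdist_mix_le hu (fun r x => div_nonneg (hw₁.1.1 (x, r)) (hu.1 r))
    (fun r y => div_nonneg (hw₂.1.1 (y, r)) (hu.1 r)) hW₀ fun r hr => (hW r hr).1
  rw [← hw₁.eq_sum_mul_cond, ← hw₂.eq_sum_mul_cond] at hmix
  have hnear_sum := sum_mul_le_sum_mul_of_pos hu.1 fun r hr => (hW r hr).2
  simp only [mul_add, sum_add_distrib, ← sum_mul, hu.2, one_mul] at hnear_sum
  linarith

theorem stmt15 {S T R : Type*} [Fintype S] [Fintype T] [Fintype R]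
    (p : S → ℝ) (q : T → ℝ) (u : R → ℝ)
    (hp : IsDist p) (hq : IsDist q) (hu : IsDist u)
    (w₁ : S × R → ℝ) (w₂ : T × R → ℝ)
    (hw₁ : IsCoupling w₁ p u) (hw₂ : IsCoupling w₂ q u) :
    kdist p q ≤
      (∑ r : R, u r * kdist (fun x => w₁ (x, r) / u r) (fun y => w₂ (y, r) / u r))
        + 2 * ent u :=
  stmt15_general p q u hu w₁ w₂ hw₁ hw₂
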